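/- Let H be the parity-check matrix of a proper array code with modulus q consisting of four block-rows, and let A be the 4q × mq matrix obtained by deleting some q − m block-columns from H. The shortened array code with parity-check matrix A has girth at least eight if and only if the set of labels of the block-columns retained in A is both non-averaging and 2-non-averaging over Z_q. -/

import Mathlib

/-- The Tanner graph of a (possibly shortened) array code with modulus `q`,
block-row labels `a 0, …, a (r-1)` (elements of `ZMod q`), and retained
block-column label set `S ⊆ ZMod q`.  Row vertices are pairs `(i, x)`
(block-row `i`, row `x` within the block); column vertices are pairs `(j, y)`
with `j ∈ S` (block-column labeled `j`, column `y` within the block).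
A row `(i, x)` is adjacent to a column `(j, y)` iff the corresponding entry of
the parity-check matrix, i.e. entry `(x, y)` of `P ^ (a i * j)`, equals `1`,
which happens iff `y = x + a i * j`. -/
def tannerGraph (q r : ℕ) (a : Fin r → ZMod q) (S : Finset (ZMod q)) :
    SimpleGraph ((Fin r × ZMod q) ⊕ ({j // j ∈ S} × ZMod q)) where
  Adj u v :=
    match u, v with
    | Sum.inl (i, x), Sum.inr (j, y) => y = x + a i * (j : ZMod q)
    | Sum.inr (j, y), Sum.inl (i, x) => y = x + a i * (j : ZMod q)
    | _, _ => False
  symm := ⟨by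
    rintro (⟨i, x⟩ | ⟨j, y⟩) (⟨i', x'⟩ | ⟨j', y'⟩) h <;> simp_all⟩
  loopless := ⟨by
    rintro (⟨i, x⟩ | ⟨j, y⟩) h <;> simp_all⟩

/-- A set `S ⊆ ZMod q` is `c`-non-averaging over `Z_q` if `x + c·y ≡ (c+1)·z (mod q)`
with `x, y, z ∈ S` implies `x = y = z`.  (`1`-non-averaging = non-averaging.) -/
def CNonAveraging {q : ℕ} (c : ℕ) (S : Finset (ZMod q)) : Prop :=
  ∀ x ∈ S, ∀ y ∈ S, ∀ z ∈ S, x + (c : ZMod q) * y = ((c : ZMod q) + 1) * z → x = z ∧ y = z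

/-!
The Tanner graph is bipartite and a column vertex has at most one neighbour in each block-row.
Hence a 4-cycle through block-rows `i ≠ i'` and block-columns `j ≠ j'` would force
`(a i - a i') * (j - j') = 0`, impossible over the field `ZMod q`, and a 6-cycle through
block-rows `i₁, i₂, i₃` and block-columns `j₁, j₂, j₃` exists exactly when these labels are
distinct and `(a i₁ - a i₂) * j₁ + (a i₂ - a i₃) * j₂ + (a i₃ - a i₁) * j₃ = 0`.
For `a i = a₀ + i * d` this relation is `d` times the one for the labels `0, 1, 2, 3`. Listing
the three rows in increasing order (rotating or reversing the cycle), the coefficients are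
`(-1, -1, 2)`, `(-1, -2, 3)` or `(-2, -1, 3)`, i.e. the relation reads `x + y = 2 z` or
`x + 2 y = 3 z` for distinct `x, y, z ∈ S`, which is what the two non-averaging conditions exclude.
-/

open SimpleGraph Function

lemma SimpleGraph.le_egirth_of_forall_isCycle_mem {V : Type*} {G : SimpleGraph V} (T : Set V)
    (hT : ∀ ⦃u v⦄, G.Adj u v → u ∈ T ∨ v ∈ T) {n : ℕ∞}
    (h : ∀ u ∈ T, ∀ w : G.Walk u u, w.IsCycle → n ≤ w.length) : n ≤ G.egirth := by
  classical
  refine le_egirth.mpr fun v w hw => ?_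
  have rotated : ∀ u ∈ w.support, u ∈ T → n ≤ w.length := fun u hu huT => by
    simpa using h u huT _ (hw.rotate hu)
  cases w with
  | nil => exact (hw.ne_nil rfl).elim
  | cons hadj p =>
    rcases hT hadj with hv | hv
    · exact rotated _ (Walk.start_mem_support _) hv
    · exact rotated _ (by simp) hv

section TannerGraph

variable {q r : ℕ} {a : Fin r → ZMod q} {S : Finset (ZMod q)}

lemma tannerGraph_adj_inl_inr {u : Fin r × ZMod q} {c : {j // j ∈ S} × ZMod q} :
    (tannerGraph q r a S).Adj (.inl u) (.inr c) ↔ c.2 = u.2 + a u.1 * c.1 :=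
  Iff.rfl

lemma tannerGraph_exists_inr_of_adj_inl {u : Fin r × ZMod q} {v}
    (h : (tannerGraph q r a S).Adj (.inl u) v) : ∃ c, v = .inr c := by
  rcases v with _ | c
  · exact h.elim
  · exact ⟨c, rfl⟩

lemma tannerGraph_exists_inl_of_adj_inr {c : {j // j ∈ S} × ZMod q} {v}
    (h : (tannerGraph q r a S).Adj (.inr c) v) : ∃ u, v = .inl u := by
  rcases v with u | _
  · exact ⟨u, rfl⟩
  · exact h.elim

lemma tannerGraph_adj_mem_range_inl {u v} (h : (tannerGraph q r a S).Adj u v) :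
    u ∈ Set.range Sum.inl ∨ v ∈ Set.range Sum.inl := by
  rcases u with u | c
  · exact .inl ⟨u, rfl⟩
  · obtain ⟨u, rfl⟩ := tannerGraph_exists_inl_of_adj_inr h
    exact .inr ⟨u, rfl⟩

lemma tannerGraph_inl_eq_of_adj {u u' : Fin r × ZMod q} {c : {j // j ∈ S} × ZMod q}
    (h : (tannerGraph q r a S).Adj (.inl u) (.inr c))
    (h' : (tannerGraph q r a S).Adj (.inl u') (.inr c)) (hu : u.1 = u'.1) : u = u' := by
  rw [tannerGraph_adj_inl_inr, hu] at h
  rw [tannerGraph_adj_inl_inr] at h'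
  exact Prod.ext hu (by linear_combination h' - h)

lemma tannerGraph_inr_eq_of_adj {u : Fin r × ZMod q} {c c' : {j // j ∈ S} × ZMod q}
    (h : (tannerGraph q r a S).Adj (.inl u) (.inr c))
    (h' : (tannerGraph q r a S).Adj (.inl u) (.inr c')) (hc : (c.1 : ZMod q) = c'.1) :
    c = c' := by
  rw [tannerGraph_adj_inl_inr] at h h'
  exact Prod.ext (Subtype.ext hc) (by rw [h, h', hc])

/-- The label condition for a 6-cycle through block-rows `i₁, i₂, i₃` and block-columns
`j₁, j₂, j₃` (in this cyclic order): the shifts `a i * j` accumulated along it cancel. -/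
def HasHexagon (a : Fin r → ZMod q) (S : Finset (ZMod q)) : Prop :=
  ∃ i₁ i₂ i₃ : Fin r, ∃ j₁ ∈ S, ∃ j₂ ∈ S, ∃ j₃ ∈ S,
    i₁ ≠ i₂ ∧ i₁ ≠ i₃ ∧ i₂ ≠ i₃ ∧ j₁ ≠ j₂ ∧ j₁ ≠ j₃ ∧ j₂ ≠ j₃ ∧
    (a i₁ - a i₂) * j₁ + (a i₂ - a i₃) * j₂ + (a i₃ - a i₁) * j₃ = 0

lemma tannerGraph_eq_or_eq_of_adj [Fact q.Prime] (ha : Injective a)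
    {u u' : Fin r × ZMod q} {c c' : {j // j ∈ S} × ZMod q}
    (h₁ : (tannerGraph q r a S).Adj (.inl u) (.inr c))
    (h₂ : (tannerGraph q r a S).Adj (.inl u') (.inr c))
    (h₃ : (tannerGraph q r a S).Adj (.inl u) (.inr c'))
    (h₄ : (tannerGraph q r a S).Adj (.inl u') (.inr c')) : u = u' ∨ c = c' := by
  by_cases hu : u.1 = u'.1
  · exact .inl (tannerGraph_inl_eq_of_adj h₁ h₂ hu)
  refine .inr (tannerGraph_inr_eq_of_adj h₁ h₃ ?_)
  rw [tannerGraph_adj_inl_inr] at h₁ h₂ h₃ h₄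
  have hprod : (a u.1 - a u'.1) * (c.1 - c'.1 : ZMod q) = 0 := by
    linear_combination h₂ - h₁ - h₄ + h₃
  exact sub_eq_zero.mp ((mul_eq_zero.mp hprod).resolve_left (sub_ne_zero.mpr (ha.ne hu)))

lemma hasHexagon_of_adj {u₀ u₂ u₄ : Fin r × ZMod q} {c₁ c₃ c₅ : {j // j ∈ S} × ZMod q}
    (h₁ : (tannerGraph q r a S).Adj (.inl u₀) (.inr c₁))
    (h₂ : (tannerGraph q r a S).Adj (.inl u₂) (.inr c₁))
    (h₃ : (tannerGraph q r a S).Adj (.inl u₂) (.inr c₃))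
    (h₄ : (tannerGraph q r a S).Adj (.inl u₄) (.inr c₃))
    (h₅ : (tannerGraph q r a S).Adj (.inl u₄) (.inr c₅))
    (h₆ : (tannerGraph q r a S).Adj (.inl u₀) (.inr c₅))
    (hu₀₂ : u₀ ≠ u₂) (hu₀₄ : u₀ ≠ u₄) (hu₂₄ : u₂ ≠ u₄)
    (hc₁₃ : c₁ ≠ c₃) (hc₁₅ : c₁ ≠ c₅) (hc₃₅ : c₃ ≠ c₅) : HasHexagon a S := by
  refine ⟨u₀.1, u₂.1, u₄.1, c₁.1, c₁.1.2, c₃.1, c₃.1.2, c₅.1, c₅.1.2,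
    fun h => hu₀₂ (tannerGraph_inl_eq_of_adj h₁ h₂ h),
    fun h => hu₀₄ (tannerGraph_inl_eq_of_adj h₆ h₅ h),
    fun h => hu₂₄ (tannerGraph_inl_eq_of_adj h₃ h₄ h),
    fun h => hc₁₃ (tannerGraph_inr_eq_of_adj h₂ h₃ h),
    fun h => hc₁₅ (tannerGraph_inr_eq_of_adj h₁ h₆ h),
    fun h => hc₃₅ (tannerGraph_inr_eq_of_adj h₄ h₅ h), ?_⟩
  rw [tannerGraph_adj_inl_inr] at h₁ h₂ h₃ h₄ h₅ h₆
  linear_combination h₂ - h₁ + h₄ - h₃ + h₆ - h₅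

lemma tannerGraph_eight_le_length_of_isCycle [Fact q.Prime] (ha : Injective a)
    (hS : ¬ HasHexagon a S) {u₀ : Fin r × ZMod q}
    (w : (tannerGraph q r a S).Walk (.inl u₀) (.inl u₀)) (hw : w.IsCycle) : 8 ≤ w.length := by
  rcases w with _ | ⟨h₁, p⟩
  · exact (hw.ne_nil rfl).elim
  obtain ⟨c₁, rfl⟩ := tannerGraph_exists_inr_of_adj_inl h₁
  rcases p with _ | ⟨h₂, p⟩
  obtain ⟨u₂, rfl⟩ := tannerGraph_exists_inl_of_adj_inr h₂
  rcases p with _ | ⟨h₃, p⟩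
  · simpa using hw.three_le_length
  obtain ⟨c₃, rfl⟩ := tannerGraph_exists_inr_of_adj_inl h₃
  rcases p with _ | ⟨h₄, p⟩
  obtain ⟨u₄, rfl⟩ := tannerGraph_exists_inl_of_adj_inr h₄
  rcases p with _ | ⟨h₅, p⟩
  · obtain ⟨hc₁₃, hu₂₀⟩ : c₁ ≠ c₃ ∧ u₂ ≠ u₀ := by simpa using hw.support_nodup
    exact ((tannerGraph_eq_or_eq_of_adj ha h₁ h₂.symm h₄.symm h₃).elim hu₂₀.symm hc₁₃).elim
  obtain ⟨c₅, rfl⟩ := tannerGraph_exists_inr_of_adj_inl h₅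
  rcases p with _ | ⟨h₆, p⟩
  obtain ⟨u₆, rfl⟩ := tannerGraph_exists_inl_of_adj_inr h₆
  rcases p with _ | ⟨h₇, p⟩
  · obtain ⟨⟨hc₁₃, hc₁₅⟩, ⟨hu₂₄, hu₂₀⟩, hc₃₅, hu₄₀⟩ :
        (c₁ ≠ c₃ ∧ c₁ ≠ c₅) ∧ (u₂ ≠ u₄ ∧ u₂ ≠ u₀) ∧ c₃ ≠ c₅ ∧ u₄ ≠ u₀ := by
      simpa using hw.support_nodup
    exact (hS (hasHexagon_of_adj h₁ h₂.symm h₃ h₄.symm h₅ h₆.symm hu₂₀.symm hu₄₀.symm hu₂₄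
      hc₁₃ hc₁₅ hc₃₅)).elim
  obtain ⟨c₇, rfl⟩ := tannerGraph_exists_inr_of_adj_inl h₇
  rcases p with _ | ⟨h₈, p⟩
  simp

lemma tannerGraph_egirth_le_six_of_hasHexagon (h : HasHexagon a S) :
    (tannerGraph q r a S).egirth ≤ 6 := by
  obtain ⟨i₁, i₂, i₃, j₁, hj₁, j₂, hj₂, j₃, hj₃, hi₁₂, hi₁₃, hi₂₃, hj₁₂, hj₁₃, hj₂₃, hrel⟩ := h
  -- the row offsets met when walking around the hexagon from `(i₁, 0)`
  obtain ⟨x₂, hx₂⟩ : ∃ x₂, x₂ = (a i₁ - a i₂) * j₁ := ⟨_, rfl⟩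
  obtain ⟨x₃, hx₃⟩ : ∃ x₃, x₃ = x₂ + (a i₂ - a i₃) * j₂ := ⟨_, rfl⟩
  let G := tannerGraph q r a S
  have e₁ : G.Adj (.inl (i₁, 0)) (.inr (⟨j₁, hj₁⟩, 0 + a i₁ * j₁)) := rfl
  have e₂ : G.Adj (.inr (⟨j₁, hj₁⟩, 0 + a i₁ * j₁)) (.inl (i₂, x₂)) :=
    show _ = x₂ + a i₂ * j₁ by linear_combination -hx₂
  have e₃ : G.Adj (.inl (i₂, x₂)) (.inr (⟨j₂, hj₂⟩, x₂ + a i₂ * j₂)) := rfl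
  have e₄ : G.Adj (.inr (⟨j₂, hj₂⟩, x₂ + a i₂ * j₂)) (.inl (i₃, x₃)) :=
    show _ = x₃ + a i₃ * j₂ by linear_combination -hx₃
  have e₅ : G.Adj (.inl (i₃, x₃)) (.inr (⟨j₃, hj₃⟩, x₃ + a i₃ * j₃)) := rfl
  have e₆ : G.Adj (.inr (⟨j₃, hj₃⟩, x₃ + a i₃ * j₃)) (.inl (i₁, 0)) :=
    show _ = 0 + a i₁ * j₃ by linear_combination hx₃ + hx₂ + hrel
  let w : G.Walk _ _ := .cons e₁ <| .cons e₂ <| .cons e₃ <| .cons e₄ <| .cons e₅ <| .cons e₆ .nil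
  have hw : w.IsCycle := by
    simp [w, Walk.isCycle_def, hi₁₂, hi₁₃, hi₂₃, hj₁₂, hj₁₃, hj₂₃, hi₁₂.symm, hi₁₃.symm]
  exact egirth_le_length hw

theorem tannerGraph_eight_le_egirth_iff [Fact q.Prime] (ha : Injective a) :
    8 ≤ (tannerGraph q r a S).egirth ↔ ¬ HasHexagon a S := by
  refine ⟨fun h8 hS => ?_, fun hS => ?_⟩
  · have := h8.trans (tannerGraph_egirth_le_six_of_hasHexagon hS)
    norm_num at this
  · refine le_egirth_of_forall_isCycle_mem _ (fun _ _ => tannerGraph_adj_mem_range_inl) ?_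
    rintro _ ⟨u, rfl⟩ w hw
    exact_mod_cast tannerGraph_eight_le_length_of_isCycle ha hS w hw

end TannerGraph

section Arithmetic

variable {q : ℕ} {S : Finset (ZMod q)}

lemma hasHexagon_affine_iff [Fact q.Prime] {r : ℕ} {b : Fin r → ZMod q} (a₀ : ZMod q)
    {d : ZMod q} (hd : d ≠ 0) : HasHexagon (fun i => a₀ + b i * d) S ↔ HasHexagon b S := by
  have key : ∀ i₁ i₂ i₃ : Fin r, ∀ j₁ j₂ j₃ : ZMod q,
      ((a₀ + b i₁ * d) - (a₀ + b i₂ * d)) * j₁ + ((a₀ + b i₂ * d) - (a₀ + b i₃ * d)) * j₂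
        + ((a₀ + b i₃ * d) - (a₀ + b i₁ * d)) * j₃
      = d * ((b i₁ - b i₂) * j₁ + (b i₂ - b i₃) * j₂ + (b i₃ - b i₁) * j₃) := by
    intros; ring
  simp only [HasHexagon, key, mul_eq_zero, hd, false_or]

lemma not_hasHexagon_of_cNonAveraging (hna₁ : CNonAveraging 1 S) (hna₂ : CNonAveraging 2 S) :
    ¬ HasHexagon (fun i : Fin 4 => ((i : ℕ) : ZMod q)) S := by
  rintro ⟨i₁, i₂, i₃, j₁, hj₁, j₂, hj₂, j₃, hj₃, hi₁₂, hi₁₃, hi₂₃, hj₁₂, hj₁₃, hj₂₃, hrel⟩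
  -- rotating and reversing the hexagon lists its rows in increasing order
  wlog hmin : i₁ < i₂ ∧ i₁ < i₃ generalizing i₁ i₂ i₃ j₁ j₂ j₃
  · rcases lt_or_gt_of_ne hi₂₃ with h | h
    · exact this i₂ i₃ i₁ j₂ hj₂ j₃ hj₃ j₁ hj₁ hi₂₃ hi₁₂.symm hi₁₃.symm hj₂₃ hj₁₂.symm hj₁₃.symm
        (by linear_combination hrel) ⟨h, by omega⟩
    · exact this i₃ i₁ i₂ j₃ hj₃ j₁ hj₁ j₂ hj₂ hi₁₃.symm hi₂₃.symm hi₁₂ hj₁₃.symm hj₂₃.symm hj₁₂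
        (by linear_combination hrel) ⟨by omega, h⟩
  wlog hmid : i₂ < i₃ generalizing i₂ i₃ j₁ j₃
  · exact this i₃ i₂ j₃ hj₃ j₁ hj₁ hi₁₃ hi₁₂ hi₂₃.symm hj₂₃.symm hj₁₃.symm hj₁₂.symm
      (by linear_combination -hrel) hmin.symm (by omega)
  obtain ⟨h₁₂, -⟩ := hmin
  obtain ⟨e₁, e₂, e₃⟩ | ⟨e₁, e₂, e₃⟩ | ⟨e₁, e₂, e₃⟩ | ⟨e₁, e₂, e₃⟩ :
      (i₁ : ℕ) = 0 ∧ (i₂ : ℕ) = 1 ∧ (i₃ : ℕ) = 2 ∨ (i₁ : ℕ) = 0 ∧ (i₂ : ℕ) = 1 ∧ (i₃ : ℕ) = 3 ∨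
      (i₁ : ℕ) = 0 ∧ (i₂ : ℕ) = 2 ∧ (i₃ : ℕ) = 3 ∨ (i₁ : ℕ) = 1 ∧ (i₂ : ℕ) = 2 ∧ (i₃ : ℕ) = 3 := by
    omega
  all_goals simp only [e₁, e₂, e₃] at hrel
  · exact hj₁₃ (hna₁ j₁ hj₁ j₂ hj₂ j₃ hj₃ (by push_cast; linear_combination -hrel)).1
  · exact hj₁₃ (hna₂ j₁ hj₁ j₂ hj₂ j₃ hj₃ (by push_cast; linear_combination -hrel)).1
  · exact hj₂₃ (hna₂ j₂ hj₂ j₁ hj₁ j₃ hj₃ (by push_cast; linear_combination -hrel)).1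
  · exact hj₁₃ (hna₁ j₁ hj₁ j₂ hj₂ j₃ hj₃ (by push_cast; linear_combination -hrel)).1

lemma ne_and_ne_and_ne_of_add_mul_eq {R : Type*} [CommRing R] [NoZeroDivisors R] {c x y z : R}
    (hc : c ≠ 0) (hc₁ : c + 1 ≠ 0) (h : x + c * y = (c + 1) * z) (hxyz : ¬ (x = z ∧ y = z)) :
    x ≠ y ∧ x ≠ z ∧ y ≠ z := by
  have hxz : x ≠ z := fun hxz => hxyz ⟨hxz, mul_left_cancel₀ hc (by linear_combination h - hxz)⟩
  refine ⟨fun hxy => hxz (mul_left_cancel₀ hc₁ ?_), hxz, fun hyz => hxyz ⟨?_, hyz⟩⟩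
  · linear_combination h + c * hxy
  · linear_combination h - c * hyz

lemma cNonAveraging_of_not_hasHexagon [Fact q.Prime] {r c : ℕ}
    (hinj : Injective (fun i : Fin r => ((i : ℕ) : ZMod q))) (hc : 0 < c) (hcr : c + 1 < r)
    (h : ¬ HasHexagon (fun i : Fin r => ((i : ℕ) : ZMod q)) S) : CNonAveraging c S := by
  intro x hx y hy z hz hxyz
  by_contra hne
  let i₀ : Fin r := ⟨0, by omega⟩
  let i₁ : Fin r := ⟨1, by omega⟩
  let i₂ : Fin r := ⟨c + 1, hcr⟩
  have hc₀ : (c : ZMod q) ≠ 0 := fun h0 => by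
    have := congrArg Fin.val (@hinj i₂ i₁ (by simp [i₁, i₂, h0]))
    simp only [i₁, i₂] at this
    omega
  have hc₁ : (c : ZMod q) + 1 ≠ 0 := fun h0 => by
    have := congrArg Fin.val (@hinj i₂ i₀ (by simp [i₀, i₂, h0]))
    simp only [i₀, i₂] at this
    omega
  obtain ⟨hxy, hxz, hyz⟩ := ne_and_ne_and_ne_of_add_mul_eq hc₀ hc₁ hxyz hne
  refine h ⟨i₀, i₁, i₂, x, hx, y, hy, z, hz, by simp [i₀, i₁], by simp [i₀, i₂],
    by simp [i₁, i₂, Fin.ext_iff]; omega, hxy, hxz, hyz, ?_⟩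
  simp only [i₀, i₁, i₂, Nat.cast_zero, Nat.cast_one, Nat.cast_add]
  linear_combination -hxyz

end Arithmetic

theorem pac_r4_girth_eight_iff_nonaveraging_general (q : ℕ) (hq : q.Prime)
    (a : Fin 4 → ZMod q) (a₀ d : ZMod q) (hd : d ≠ 0)
    (hAP : ∀ i : Fin 4, a i = a₀ + (i : ℕ) * d) (ha : Function.Injective a)
    (S : Finset (ZMod q)) :
    8 ≤ (tannerGraph q 4 a S).egirth ↔ CNonAveraging 1 S ∧ CNonAveraging 2 S := by
  have := Fact.mk hq
  have hinj : Injective (fun i : Fin 4 => ((i : ℕ) : ZMod q)) := fun i i' h =>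
    ha (by simp only [hAP, h])
  rw [tannerGraph_eight_le_egirth_iff ha, show a = _ from funext hAP, hasHexagon_affine_iff a₀ hd]
  exact ⟨fun h => ⟨cNonAveraging_of_not_hasHexagon hinj one_pos (by norm_num) h,
      cNonAveraging_of_not_hasHexagon hinj two_pos (by norm_num) h⟩,
    fun ⟨hna₁, hna₂⟩ => not_hasHexagon_of_cNonAveraging hna₁ hna₂⟩

/-- Let `H` be the parity-check matrix of a proper array code with
modulus `q` (an odd prime) consisting of four block-rows (labels in arithmetic
progression with common difference `d ≢ 0`, distinct), and let `A` be obtained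
from `H` by deleting all block-columns whose labels are outside `S`.  The
shortened array code with parity-check matrix `A` has girth at least eight iff
`S` is both non-averaging and 2-non-averaging over `Z_q`. -/
theorem pac_r4_girth_eight_iff_nonaveraging (q : ℕ) (hq : q.Prime) (hqodd : Odd q)
    (a : Fin 4 → ZMod q) (a₀ d : ZMod q) (hd : d ≠ 0)
    (hAP : ∀ i : Fin 4, a i = a₀ + (i : ℕ) * d) (ha : Function.Injective a)
    (S : Finset (ZMod q)) :
    8 ≤ (tannerGraph q 4 a S).egirth ↔ CNonAveraging 1 S ∧ CNonAveraging 2 S :=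
  pac_r4_girth_eight_iff_nonaveraging_general q hq a a₀ d hd hAP ha S
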